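/- arXiv:2209.05146 — 4 statements merged into one kernel-verified Lean document; each statement's English description precedes it below -/
import Mathlib

section
/- Monotonicity of the Riccati-type operator in its matrix argument: if X and Y are n_x×n_x positive semidefinite symmetric matrices with X ⪯ Y, then for every λ ∈ [0,1], φ ∈ [0,1] and α > 0 one has 𝒳_λ(X, α, φ) ⪯ 𝒳_λ(Y, α, φ). -/
/-!
With `S = α • R` and the Kalman gain `K X = X Lᵀ (L X Lᵀ + S)⁻¹`, the operator is
`(1 - λφ) A X Aᵀ + λφ A (X - K X L X) Aᵀ + α Q`, so it suffices that the measurement update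
`X ↦ X - K X L X` is monotone. This follows from the exact identity
`(Y - K Y L Y) - (X - K X L X)
  = (1 - K Y L) (Y - X) (1 - K Y L)ᵀ + (K Y - K X) (L X Lᵀ + S) (K Y - K X)ᵀ`,
whose right-hand side is a sum of congruences of positive semidefinite matrices.
-/

open Matrix

/-- The Riccati-type operator 𝒳_λ(X, α, φ). -/
noncomputable def calX {nx ny : ℕ} (A : Matrix (Fin nx) (Fin nx) ℝ)
    (L : Matrix (Fin ny) (Fin nx) ℝ) (Q : Matrix (Fin nx) (Fin nx) ℝ)
    (R : Matrix (Fin ny) (Fin ny) ℝ) (lam : ℝ) (X : Matrix (Fin nx) (Fin nx) ℝ)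
    (al phi : ℝ) : Matrix (Fin nx) (Fin nx) ℝ :=
  (1 - lam * phi) • (A * X * Aᵀ + al • Q) +
    (lam * phi) •
      (A * X * Aᵀ + al • Q - A * X * Lᵀ * (L * X * Lᵀ + al • R)⁻¹ * (L * X * Aᵀ))

/-- Loewner order: `X ⪯ Y` iff `Y - X` is positive semidefinite. -/
def loewnerLE {nx : ℕ} (X Y : Matrix (Fin nx) (Fin nx) ℝ) : Prop :=
  (Y - X).PosSemidef

namespace Matrix

lemma PosSemidef.transpose_eq {n : Type*} {A : Matrix n n ℝ} (hA : A.PosSemidef) : Aᵀ = A :=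
  (isHermitian_iff_isSymm.mp hA.1).eq

section KalmanUpdate

variable {α : Type*} [CommRing α] {m n : Type*} [Fintype m] [Fintype n] [DecidableEq m]
  (L : Matrix m n α) (S : Matrix m m α) {X Y : Matrix n n α}

noncomputable def kalmanGain (X : Matrix n n α) : Matrix n m α :=
  X * Lᵀ * (L * X * Lᵀ + S)⁻¹

noncomputable def kalmanUpdate (X : Matrix n n α) : Matrix n n α :=
  X - kalmanGain L S X * L * X

variable {L S}

lemma transpose_kalmanGain (hX : Xᵀ = X) (hS : Sᵀ = S) :
    (kalmanGain L S X)ᵀ = (L * X * Lᵀ + S)⁻¹ * L * X := by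
  simp [kalmanGain, transpose_nonsing_inv, hX, hS, Matrix.mul_assoc]

lemma transpose_kalmanUpdate (hX : Xᵀ = X) (hS : Sᵀ = S) :
    (kalmanUpdate L S X)ᵀ = kalmanUpdate L S X := by
  rw [kalmanUpdate, transpose_sub, transpose_mul, transpose_mul, transpose_kalmanGain hX hS,
    kalmanGain, hX]
  simp only [Matrix.mul_assoc]

lemma kalmanUpdate_mul_transpose (hX : IsUnit (L * X * Lᵀ + S).det) :
    kalmanUpdate L S X * Lᵀ = kalmanGain L S X * S :=
  calc kalmanUpdate L S X * Lᵀ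
      = X * Lᵀ * ((L * X * Lᵀ + S)⁻¹ * (L * X * Lᵀ + S)
          - (L * X * Lᵀ + S)⁻¹ * (L * X * Lᵀ)) := by
        rw [nonsing_inv_mul _ hX]
        simp only [kalmanUpdate, kalmanGain, Matrix.sub_mul, Matrix.mul_sub, Matrix.mul_one,
          Matrix.mul_assoc]
    _ = kalmanGain L S X * S := by
        rw [← Matrix.mul_sub, add_sub_cancel_left, kalmanGain, ← Matrix.mul_assoc]

lemma mul_transpose_kalmanUpdate (hX : IsUnit (L * X * Lᵀ + S).det) (hXs : Xᵀ = X)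
    (hS : Sᵀ = S) : L * kalmanUpdate L S X = S * (kalmanGain L S X)ᵀ := by
  simpa [hS, transpose_kalmanUpdate hXs hS] using
    congrArg transpose (kalmanUpdate_mul_transpose hX)

lemma kalmanUpdate_sub_kalmanUpdate_eq_mul [DecidableEq n] (hX : IsUnit (L * X * Lᵀ + S).det)
    (hY : IsUnit (L * Y * Lᵀ + S).det) (hYs : Yᵀ = Y) (hS : Sᵀ = S) :
    kalmanUpdate L S Y - kalmanUpdate L S X =
      (1 - kalmanGain L S X * L) * (Y - X) * (1 - kalmanGain L S Y * L)ᵀ := by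
  have hYT : Y * (1 - kalmanGain L S Y * L)ᵀ = kalmanUpdate L S Y := by
    rw [← transpose_kalmanUpdate hYs hS]
    simp [kalmanUpdate, hYs, Matrix.mul_sub, Matrix.mul_assoc]
  have hXL : (1 - kalmanGain L S X * L) * X = kalmanUpdate L S X := by
    rw [Matrix.sub_mul, Matrix.one_mul, kalmanUpdate]
  calc kalmanUpdate L S Y - kalmanUpdate L S X
      = kalmanUpdate L S Y - kalmanGain L S X * (S * (kalmanGain L S Y)ᵀ) - kalmanUpdate L S X
          + kalmanGain L S X * S * (kalmanGain L S Y)ᵀ := by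
        rw [Matrix.mul_assoc]; abel
    _ = (1 - kalmanGain L S X * L) * (Y * (1 - kalmanGain L S Y * L)ᵀ)
          - (1 - kalmanGain L S X * L) * X * (1 - kalmanGain L S Y * L)ᵀ := by
        rw [hYT, hXL, ← mul_transpose_kalmanUpdate hY hYs hS, ← kalmanUpdate_mul_transpose hX]
        simp only [transpose_sub, transpose_one, transpose_mul, Matrix.sub_mul,
          Matrix.mul_sub, Matrix.one_mul, Matrix.mul_one, Matrix.mul_assoc]
        abel
    _ = _ := by rw [← Matrix.mul_assoc, ← Matrix.sub_mul, ← Matrix.mul_sub]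

lemma mul_transpose_kalmanGain_sub [DecidableEq n] (hX : IsUnit (L * X * Lᵀ + S).det)
    (hY : IsUnit (L * Y * Lᵀ + S).det) (hXs : Xᵀ = X) (hYs : Yᵀ = Y) (hS : Sᵀ = S) :
    (L * X * Lᵀ + S) * (kalmanGain L S Y - kalmanGain L S X)ᵀ =
      L * (Y - X) * (1 - kalmanGain L S Y * L)ᵀ := by
  have hM : L * X * Lᵀ + S = (L * Y * Lᵀ + S) - L * (Y - X) * Lᵀ := by
    simp only [Matrix.mul_sub, Matrix.sub_mul]; abel
  calc (L * X * Lᵀ + S) * (kalmanGain L S Y - kalmanGain L S X)ᵀ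
      = (L * X * Lᵀ + S) * ((L * Y * Lᵀ + S)⁻¹ * L * Y)
          - (L * X * Lᵀ + S) * (L * X * Lᵀ + S)⁻¹ * L * X := by
        rw [transpose_sub, transpose_kalmanGain hXs hS, transpose_kalmanGain hYs hS,
          Matrix.mul_sub]
        simp only [Matrix.mul_assoc]
    _ = L * Y - L * (Y - X) * Lᵀ * ((L * Y * Lᵀ + S)⁻¹ * L * Y) - L * X := by
        rw [mul_nonsing_inv _ hX, Matrix.one_mul, hM, Matrix.sub_mul, ← Matrix.mul_assoc,
          ← Matrix.mul_assoc, mul_nonsing_inv _ hY, Matrix.one_mul]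
    _ = L * (Y - X) * (1 - kalmanGain L S Y * L)ᵀ := by
        rw [transpose_sub, transpose_one, transpose_mul, transpose_kalmanGain hYs hS]
        simp only [Matrix.mul_sub, Matrix.mul_one, Matrix.mul_assoc]
        abel

lemma kalmanUpdate_sub_kalmanUpdate [DecidableEq n] (hX : IsUnit (L * X * Lᵀ + S).det)
    (hY : IsUnit (L * Y * Lᵀ + S).det) (hXs : Xᵀ = X) (hYs : Yᵀ = Y) (hS : Sᵀ = S) :
    kalmanUpdate L S Y - kalmanUpdate L S X =
      (1 - kalmanGain L S Y * L) * (Y - X) * (1 - kalmanGain L S Y * L)ᵀ +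
        (kalmanGain L S Y - kalmanGain L S X) * (L * X * Lᵀ + S) *
          (kalmanGain L S Y - kalmanGain L S X)ᵀ := by
  rw [Matrix.mul_assoc (kalmanGain L S Y - kalmanGain L S X),
    mul_transpose_kalmanGain_sub hX hY hXs hYs hS,
    kalmanUpdate_sub_kalmanUpdate_eq_mul hX hY hYs hS]
  simp only [Matrix.sub_mul, Matrix.one_mul, Matrix.mul_assoc]
  abel

end KalmanUpdate

section Real

variable {m n : Type*} [Fintype m] [Fintype n]

lemma PosSemidef.mul_mul_transpose_same {A : Matrix n n ℝ} (hA : A.PosSemidef)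
    (B : Matrix m n ℝ) : (B * A * Bᵀ).PosSemidef := by
  simpa [conjTranspose_eq_transpose_of_trivial] using hA.mul_mul_conjTranspose_same B

lemma PosSemidef.mul_mul_transpose_add_posDef {A : Matrix n n ℝ} (hA : A.PosSemidef)
    (B : Matrix m n ℝ) {S : Matrix m m ℝ} (hS : S.PosDef) : (B * A * Bᵀ + S).PosDef :=
  PosDef.posSemidef_add (hA.mul_mul_transpose_same B) hS

lemma posSemidef_kalmanUpdate_sub_kalmanUpdate [DecidableEq m] [DecidableEq n]
    {L : Matrix m n ℝ} {S : Matrix m m ℝ} {X Y : Matrix n n ℝ} (hX : X.PosSemidef)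
    (hY : Y.PosSemidef) (hS : S.PosDef)
    (hXY : (Y - X).PosSemidef) : (kalmanUpdate L S Y - kalmanUpdate L S X).PosSemidef := by
  have hMX := hX.mul_mul_transpose_add_posDef L hS
  have hMY := hY.mul_mul_transpose_add_posDef L hS
  rw [kalmanUpdate_sub_kalmanUpdate ((isUnit_iff_isUnit_det _).mp hMX.isUnit)
    ((isUnit_iff_isUnit_det _).mp hMY.isUnit) hX.transpose_eq hY.transpose_eq
    hS.posSemidef.transpose_eq]
  exact (hXY.mul_mul_transpose_same _).add (hMX.posSemidef.mul_mul_transpose_same _)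

end Real

end Matrix

lemma calX_eq_kalmanUpdate {nx ny : ℕ} (A : Matrix (Fin nx) (Fin nx) ℝ)
    (L : Matrix (Fin ny) (Fin nx) ℝ) (Q : Matrix (Fin nx) (Fin nx) ℝ)
    (R : Matrix (Fin ny) (Fin ny) ℝ) (lam : ℝ) (X : Matrix (Fin nx) (Fin nx) ℝ)
    (al phi : ℝ) :
    calX A L Q R lam X al phi = (1 - lam * phi) • (A * X * Aᵀ) +
      (lam * phi) • (A * kalmanUpdate L (al • R) X * Aᵀ) + al • Q := by
  simp only [calX, kalmanUpdate, kalmanGain, Matrix.mul_sub, Matrix.sub_mul, Matrix.mul_assoc]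
  module

theorem stmt_0_general {nx ny : ℕ}
    (A : Matrix (Fin nx) (Fin nx) ℝ) (L : Matrix (Fin ny) (Fin nx) ℝ)
    (Q : Matrix (Fin nx) (Fin nx) ℝ) (R : Matrix (Fin ny) (Fin ny) ℝ)
    (hR : R.PosDef)
    (X Y : Matrix (Fin nx) (Fin nx) ℝ) (hX : X.PosSemidef) (hY : Y.PosSemidef)
    (hXY : loewnerLE X Y)
    (lam phi al : ℝ) (hlam : lam ∈ Set.Icc (0 : ℝ) 1)
    (hphi : phi ∈ Set.Icc (0 : ℝ) 1) (hal : 0 < al) :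
    loewnerLE (calX A L Q R lam X al phi) (calX A L Q R lam Y al phi) := by
  have hc : 0 ≤ lam * phi := mul_nonneg hlam.1 hphi.1
  have hc' : 0 ≤ 1 - lam * phi := sub_nonneg.mpr (mul_le_one₀ hlam.2 hphi.1 hphi.2)
  set G := kalmanUpdate L (al • R)
  have hdiff : calX A L Q R lam Y al phi - calX A L Q R lam X al phi =
      (1 - lam * phi) • (A * (Y - X) * Aᵀ) +
        (lam * phi) • (A * (G Y - G X) * Aᵀ) := by
    simp only [calX_eq_kalmanUpdate, Matrix.mul_sub, Matrix.sub_mul]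
    module
  rw [loewnerLE, hdiff]
  have hG : (G Y - G X).PosSemidef :=
    posSemidef_kalmanUpdate_sub_kalmanUpdate hX hY (hR.smul hal) hXY
  exact ((hXY.mul_mul_transpose_same A).smul hc').add ((hG.mul_mul_transpose_same A).smul hc)

theorem stmt_0 {nx ny : ℕ} (hnx : 0 < nx) (hny : 0 < ny)
    (A : Matrix (Fin nx) (Fin nx) ℝ) (L : Matrix (Fin ny) (Fin nx) ℝ)
    (Q : Matrix (Fin nx) (Fin nx) ℝ) (R : Matrix (Fin ny) (Fin ny) ℝ)
    (hQ : Q.PosDef) (hR : R.PosDef)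
    (X Y : Matrix (Fin nx) (Fin nx) ℝ) (hX : X.PosSemidef) (hY : Y.PosSemidef)
    (hXY : loewnerLE X Y)
    (lam phi al : ℝ) (hlam : lam ∈ Set.Icc (0 : ℝ) 1)
    (hphi : phi ∈ Set.Icc (0 : ℝ) 1) (hal : 0 < al) :
    loewnerLE (calX A L Q R lam X al phi) (calX A L Q R lam Y al phi) :=
  stmt_0_general A L Q R hR X Y hX hY hXY lam phi al hlam hphi hal
end

section
/- Sub-homogeneity of the Riccati-type operator: for every scalar β > 1, every n_x×n_x positive semidefinite symmetric matrix X, every λ ∈ [0,1], φ ∈ [0,1] and α > 0, one has 𝒳_λ(βX, α, φ) ⪯ β 𝒳_λ(X, α, φ). -/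
open Matrix

/-!
Write `𝒳_λ(X) = A X Aᵀ + α Q - λφ G(X, α)` with `G(X, α) = A X Lᵀ (L X Lᵀ + α R)⁻¹ L X Aᵀ`.
Pulling `β` out of the inverse gives `G(β X, α) = β G(X, α / β)`, hence
`β 𝒳_λ(X) - 𝒳_λ(β X) = (β - 1) α Q + λφβ (G(X, α / β) - G(X, α))`.
Both terms are positive semidefinite; the second because matrix inversion is antitone on
positive definite matrices, which makes `G(X, ·)` antitone.
-/

open scoped ComplexOrder

namespace Matrix

variable {𝕜 n : Type*} [RCLike 𝕜] [Fintype n] [DecidableEq n]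

theorem inv_smul_of_ne_zero {K : Type*} [Field K] {c : K} (hc : c ≠ 0) (M : Matrix n n K) :
    (c • M)⁻¹ = c⁻¹ • M⁻¹ := by
  by_cases hM : IsUnit M.det
  · exact inv_smul' (A := M) (Units.mk0 c hc) hM
  · have hcM : ¬IsUnit (c • M).det := by simpa [det_smul, hc] using hM
    rw [nonsing_inv_apply_not_isUnit _ hM, nonsing_inv_apply_not_isUnit _ hcM, smul_zero]

theorem PosDef.posSemidef_inv_sub_inv {P Q : Matrix n n 𝕜} (hP : P.PosDef)
    (hPQ : (Q - P).PosSemidef) : (P⁻¹ - Q⁻¹).PosSemidef := by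
  have hQ : Q.PosDef := by simpa using hP.add_posSemidef hPQ
  let _ := hP.isUnit.invertible
  let _ := hQ.isUnit.invertible
  -- Writing the difference both as `P⁻¹ (Q - P) Q⁻¹` and as `Q⁻¹ (Q - P) P⁻¹` exhibits it as a
  -- sum of two congruences of positive semidefinite matrices.
  have hsplit : P⁻¹ - Q⁻¹ = Q⁻¹ * (Q - P) * Q⁻¹ + Q⁻¹ * (Q - P) * P⁻¹ * (Q - P) * Q⁻¹ := by
    calc P⁻¹ - Q⁻¹ = Q⁻¹ * (Q - P) * P⁻¹ := by
          simp [Matrix.mul_sub, Matrix.sub_mul, Matrix.mul_assoc]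
      _ = Q⁻¹ * (Q - P) * (Q⁻¹ + (P⁻¹ - Q⁻¹)) := by abel_nf
      _ = _ := by
          rw [inv_sub_inv (by simp [hP.isUnit, hQ.isUnit])]
          simp only [Matrix.mul_add, Matrix.mul_assoc]
  have hQinv : Q⁻¹ᴴ = Q⁻¹ := hQ.inv.isHermitian.eq
  rw [hsplit]
  refine .add ?_ ?_
  · simpa [hQinv] using hPQ.mul_mul_conjTranspose_same Q⁻¹
  · simpa [hQinv, hPQ.isHermitian.eq, Matrix.mul_assoc] using
      hP.inv.posSemidef.mul_mul_conjTranspose_same (Q⁻¹ * (Q - P))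

end Matrix

section KalmanCorrection

variable {k m n : Type*} [Fintype m] [Fintype n] [DecidableEq m]
  (A : Matrix k n ℝ) (L : Matrix m n ℝ) (R : Matrix m m ℝ)

noncomputable def kalmanCorrection (X : Matrix n n ℝ) (al : ℝ) : Matrix k k ℝ :=
  A * X * Lᵀ * (L * X * Lᵀ + al • R)⁻¹ * (L * X * Aᵀ)

theorem kalmanCorrection_smul (X : Matrix n n ℝ) (al : ℝ) {β : ℝ} (hβ : β ≠ 0) :
    kalmanCorrection A L R (β • X) al = β • kalmanCorrection A L R X (al / β) := by
  have hgram : L * (β • X) * Lᵀ + al • R = β • (L * X * Lᵀ + (al / β) • R) := by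
    rw [smul_add, smul_smul, mul_div_cancel₀ _ hβ, Matrix.mul_smul, Matrix.smul_mul]
  rw [kalmanCorrection, kalmanCorrection, hgram, Matrix.inv_smul_of_ne_zero hβ]
  simp only [Matrix.mul_smul, Matrix.smul_mul, smul_smul]
  rw [inv_mul_cancel₀ hβ, mul_one]

theorem kalmanCorrection_antitone [Finite k] {X : Matrix n n ℝ} (hX : X.PosSemidef)
    (hR : R.PosDef) {a b : ℝ} (ha : 0 < a) (hab : a ≤ b) :
    (kalmanCorrection A L R X a - kalmanCorrection A L R X b).PosSemidef := by
  have hgram : (L * X * Lᵀ).PosSemidef := by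
    simpa using hX.mul_mul_conjTranspose_same L
  have hinv := (PosDef.posSemidef_add hgram (hR.smul ha)).posSemidef_inv_sub_inv
    (Q := L * X * Lᵀ + b • R) (by simpa [← sub_smul] using hR.posSemidef.smul (sub_nonneg.2 hab))
  have hXt : Xᵀ = X := by simpa using hX.isHermitian.eq
  simpa [kalmanCorrection, Matrix.mul_sub, Matrix.sub_mul, Matrix.mul_assoc, transpose_mul, hXt]
    using hinv.mul_mul_conjTranspose_same (A * X * Lᵀ)

end KalmanCorrection

theorem calX_eq_sub_kalmanCorrection {nx ny : ℕ} (A : Matrix (Fin nx) (Fin nx) ℝ)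
    (L : Matrix (Fin ny) (Fin nx) ℝ) (Q : Matrix (Fin nx) (Fin nx) ℝ)
    (R : Matrix (Fin ny) (Fin ny) ℝ) (lam : ℝ) (X : Matrix (Fin nx) (Fin nx) ℝ) (al phi : ℝ) :
    calX A L Q R lam X al phi
      = A * X * Aᵀ + al • Q - (lam * phi) • kalmanCorrection A L R X al := by
  unfold calX kalmanCorrection
  module

theorem stmt_2_general {nx ny : ℕ}
    (A : Matrix (Fin nx) (Fin nx) ℝ) (L : Matrix (Fin ny) (Fin nx) ℝ)
    (Q : Matrix (Fin nx) (Fin nx) ℝ) (R : Matrix (Fin ny) (Fin ny) ℝ)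
    (hQ : Q.PosDef) (hR : R.PosDef)
    (β : ℝ) (hβ : 1 < β)
    (X : Matrix (Fin nx) (Fin nx) ℝ) (hX : X.PosSemidef)
    (lam phi al : ℝ) (hlam : lam ∈ Set.Icc (0 : ℝ) 1)
    (hphi : phi ∈ Set.Icc (0 : ℝ) 1) (hal : 0 < al) :
    loewnerLE (calX A L Q R lam (β • X) al phi) (β • calX A L Q R lam X al phi) := by
  have hβ0 : 0 < β := zero_lt_one.trans hβ
  have hdiff : β • calX A L Q R lam X al phi - calX A L Q R lam (β • X) al phi
      = ((β - 1) * al) • Q + (lam * phi * β) •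
          (kalmanCorrection A L R X (al / β) - kalmanCorrection A L R X al) := by
    rw [calX_eq_sub_kalmanCorrection, calX_eq_sub_kalmanCorrection,
      kalmanCorrection_smul _ _ _ _ _ hβ0.ne']
    simp only [Matrix.mul_smul, Matrix.smul_mul]
    module
  unfold loewnerLE
  rw [hdiff]
  refine .add (hQ.posSemidef.smul (mul_nonneg (sub_nonneg.2 hβ.le) hal.le))
    (.smul ?_ (mul_nonneg (mul_nonneg hlam.1 hphi.1) hβ0.le))
  exact kalmanCorrection_antitone A L R hX hR (div_pos hal hβ0) (div_le_self hal.le hβ.le)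

theorem stmt_2 {nx ny : ℕ} (hnx : 0 < nx) (hny : 0 < ny)
    (A : Matrix (Fin nx) (Fin nx) ℝ) (L : Matrix (Fin ny) (Fin nx) ℝ)
    (Q : Matrix (Fin nx) (Fin nx) ℝ) (R : Matrix (Fin ny) (Fin ny) ℝ)
    (hQ : Q.PosDef) (hR : R.PosDef)
    (β : ℝ) (hβ : 1 < β)
    (X : Matrix (Fin nx) (Fin nx) ℝ) (hX : X.PosSemidef)
    (lam phi al : ℝ) (hlam : lam ∈ Set.Icc (0 : ℝ) 1)
    (hphi : phi ∈ Set.Icc (0 : ℝ) 1) (hal : 0 < al) :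
    loewnerLE (calX A L Q R lam (β • X) al phi) (β • calX A L Q R lam X al phi) :=
  stmt_2_general A L Q R hQ hR β hβ X hX lam phi al hlam hphi hal
end

section
/- Inductive comparison step for coupled Riccati recursions: let β ≥ 1 and let Y_1,…,Y_N and Y'_1,…,Y'_N be n_x×n_x positive semidefinite symmetric matrices with β Y_m ⪰ Y'_m for all m = 1,…,N. Then for every n = 1,…,N, every λ ∈ [0,1], every γ̃_m ∈ [0,1] and every α_m > 0, one has β Σ_{m=1}^N p̃_{mn} 𝒳_λ(Y_m, α_m, γ̃_m) ⪰ Σ_{m=1}^N p̃_{mn} 𝒳_λ(Y'_m, α_m, γ̃_m). -/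
open Matrix

/-!
Completing the square shows that the Riccati map is the minimum over gains `K` of
`gainCov K X = (A - K L) X (A - K L)ᵀ + α (Q + K R Kᵀ)`, attained at the Kalman gain of `X`.
For a fixed gain, `gainCov K` is affine in `X` with a positive semidefinite constant term, so it
carries `Y' ⪯ β Y` (with `β ≥ 1`) to `gainCov K Y' ⪯ β gainCov K Y`. Taking `K` to be the Kalman
gain of `Y` gives `riccati Y' ⪯ gainCov K Y' ⪯ β gainCov K Y = β riccati Y`. The open-loop
prediction is the gain-zero case, and both `𝒳_λ` and the `p̃`-weighted sums are nonnegative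
combinations of these two maps.
-/

open scoped MatrixOrder

lemma Matrix.completing_square {m n 𝕜 : Type*} [Fintype n] [DecidableEq n] [CommRing 𝕜]
    {S : Matrix n n 𝕜} (hS : IsUnit S.det) (hSt : Sᵀ = S) (K M : Matrix m n 𝕜) :
    (K - M * S⁻¹) * S * (K - M * S⁻¹)ᵀ = K * S * Kᵀ - K * Mᵀ - M * Kᵀ + M * S⁻¹ * Mᵀ := by
  have hSinvt : (M * S⁻¹)ᵀ = S⁻¹ * Mᵀ := by rw [transpose_mul, transpose_nonsing_inv, hSt]
  have hleft : (K - M * S⁻¹) * S = K * S - M := by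
    rw [Matrix.sub_mul, Matrix.mul_assoc, nonsing_inv_mul _ hS, Matrix.mul_one]
  have hright : S * (K - M * S⁻¹)ᵀ = S * Kᵀ - Mᵀ := by
    rw [transpose_sub, Matrix.mul_sub, hSinvt, ← Matrix.mul_assoc, mul_nonsing_inv _ hS,
      Matrix.one_mul]
  rw [hleft, Matrix.sub_mul, Matrix.mul_assoc K, hright, transpose_sub, hSinvt]
  simp only [Matrix.mul_sub, Matrix.mul_assoc]
  abel

lemma Matrix.IsHermitian.transpose_eq_self {ι : Type*} {X : Matrix ι ι ℝ} (hX : X.IsHermitian) :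
    Xᵀ = X :=
  (isHermitian_iff_isSymm.1 hX).eq

lemma Matrix.PosSemidef.mul_mul_transpose_same_s6 {ι κ : Type*} [Fintype ι] [Finite κ]
    {X : Matrix ι ι ℝ} (hX : X.PosSemidef) (C : Matrix κ ι ℝ) : (C * X * Cᵀ).PosSemidef := by
  simpa only [conjTranspose_eq_transpose_of_trivial] using hX.mul_mul_conjTranspose_same C

lemma Matrix.mul_mul_transpose_le_mul_mul_transpose {ι κ : Type*} [Fintype ι] [Finite κ]
    {X Y : Matrix ι ι ℝ} (h : X ≤ Y) (C : Matrix κ ι ℝ) : C * X * Cᵀ ≤ C * Y * Cᵀ := by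
  rw [le_iff, ← Matrix.sub_mul, ← Matrix.mul_sub]
  exact PosSemidef.mul_mul_transpose_same_s6 h C

namespace Kalman

variable {ι κ : Type*} [Fintype ι] [Fintype κ]
  (A : Matrix ι ι ℝ) (L : Matrix κ ι ℝ) (Q : Matrix ι ι ℝ) (R : Matrix κ κ ℝ) (α : ℝ)

def predict (X : Matrix ι ι ℝ) : Matrix ι ι ℝ :=
  A * X * Aᵀ + α • Q

def innovationCov (X : Matrix ι ι ℝ) : Matrix κ κ ℝ :=
  L * X * Lᵀ + α • R

def gainCov (K : Matrix ι κ ℝ) (X : Matrix ι ι ℝ) : Matrix ι ι ℝ :=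
  (A - K * L) * X * (A - K * L)ᵀ + α • (Q + K * R * Kᵀ)

section DecidableEq

variable [DecidableEq κ]

noncomputable def gain (X : Matrix ι ι ℝ) : Matrix ι κ ℝ :=
  A * X * Lᵀ * (innovationCov L R α X)⁻¹

noncomputable def riccati (X : Matrix ι ι ℝ) : Matrix ι ι ℝ :=
  predict A Q α X - gain A L R α X * (L * X * Aᵀ)

end DecidableEq

variable {A L Q R α}

lemma innovationCov_posDef {X : Matrix ι ι ℝ} (hX : X.PosSemidef) (hR : R.PosDef) (hα : 0 < α) :
    (innovationCov L R α X).PosDef :=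
  PosDef.posSemidef_add (hX.mul_mul_transpose_same_s6 L) (hR.smul hα)

lemma gainCov_zero (X : Matrix ι ι ℝ) : gainCov A L Q R α 0 X = predict A Q α X := by
  simp [gainCov, predict]

lemma gainCov_le_smul (hQ : Q.PosSemidef) (hR : R.PosSemidef) (hα : 0 ≤ α) {β : ℝ} (hβ : 1 ≤ β)
    {Y Y' : Matrix ι ι ℝ} (hYY' : Y' ≤ β • Y) (K : Matrix ι κ ℝ) :
    gainCov A L Q R α K Y' ≤ β • gainCov A L Q R α K Y := by
  have hC : 0 ≤ α • (Q + K * R * Kᵀ) :=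
    ((hQ.add (hR.mul_mul_transpose_same_s6 K)).smul hα).nonneg
  calc gainCov A L Q R α K Y'
      ≤ (A - K * L) * (β • Y) * (A - K * L)ᵀ + β • α • (Q + K * R * Kᵀ) :=
        add_le_add (mul_mul_transpose_le_mul_mul_transpose hYY' _) (le_smul_of_one_le_left hC hβ)
    _ = β • gainCov A L Q R α K Y := by
        simp only [gainCov, smul_add, Matrix.mul_smul, Matrix.smul_mul]

lemma predict_le_smul (hQ : Q.PosSemidef) (hα : 0 ≤ α) {β : ℝ} (hβ : 1 ≤ β)
    {Y Y' : Matrix ι ι ℝ} (hYY' : Y' ≤ β • Y) :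
    predict A Q α Y' ≤ β • predict A Q α Y := by
  simpa only [gainCov_zero] using
    gainCov_le_smul (L := 0) (R := (0 : Matrix ι ι ℝ)) hQ .zero hα hβ hYY' 0

variable [DecidableEq κ]

lemma gainCov_eq_riccati_add {X : Matrix ι ι ℝ} (hX : Xᵀ = X) (hR : Rᵀ = R)
    (hS : IsUnit (innovationCov L R α X).det) (K : Matrix ι κ ℝ) :
    gainCov A L Q R α K X = riccati A L Q R α X +
      (K - gain A L R α X) * innovationCov L R α X * (K - gain A L R α X)ᵀ := by
  have hSt : (innovationCov L R α X)ᵀ = innovationCov L R α X := by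
    simp [innovationCov, transpose_mul, hX, hR, Matrix.mul_assoc]
  have hM : (A * X * Lᵀ)ᵀ = L * X * Aᵀ := by simp [transpose_mul, hX, Matrix.mul_assoc]
  rw [riccati, gain, completing_square hS hSt, hM]
  simp only [gainCov, predict, innovationCov, transpose_sub, transpose_mul,
    Matrix.mul_sub, Matrix.sub_mul, Matrix.mul_add, Matrix.add_mul,
    Matrix.mul_smul, Matrix.smul_mul, smul_add, Matrix.mul_assoc]
  abel

lemma riccati_le_gainCov {X : Matrix ι ι ℝ} (hX : X.PosSemidef) (hR : R.PosDef) (hα : 0 < α)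
    (K : Matrix ι κ ℝ) : riccati A L Q R α X ≤ gainCov A L Q R α K X := by
  have hS := innovationCov_posDef (L := L) hX hR hα
  rw [gainCov_eq_riccati_add hX.isHermitian.transpose_eq_self hR.isHermitian.transpose_eq_self
    hS.det_pos.ne'.isUnit]
  exact le_add_of_nonneg_right (hS.posSemidef.mul_mul_transpose_same_s6 _).nonneg

lemma riccati_eq_gainCov_gain {X : Matrix ι ι ℝ} (hX : X.PosSemidef) (hR : R.PosDef)
    (hα : 0 < α) : riccati A L Q R α X = gainCov A L Q R α (gain A L R α X) X := by
  rw [gainCov_eq_riccati_add hX.isHermitian.transpose_eq_self hR.isHermitian.transpose_eq_self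
    (innovationCov_posDef hX hR hα).det_pos.ne'.isUnit]
  simp

lemma riccati_le_smul (hQ : Q.PosSemidef) (hR : R.PosDef) (hα : 0 < α) {β : ℝ} (hβ : 1 ≤ β)
    {Y Y' : Matrix ι ι ℝ} (hY : Y.PosSemidef) (hY' : Y'.PosSemidef) (hYY' : Y' ≤ β • Y) :
    riccati A L Q R α Y' ≤ β • riccati A L Q R α Y := by
  set K := gain A L R α Y
  calc riccati A L Q R α Y'
      ≤ gainCov A L Q R α K Y' := riccati_le_gainCov hY' hR hα K
    _ ≤ β • gainCov A L Q R α K Y :=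
        gainCov_le_smul hQ hR.posSemidef hα.le hβ hYY' K
    _ = β • riccati A L Q R α Y := by rw [riccati_eq_gainCov_gain hY hR hα]

end Kalman

open Kalman

lemma calX_eq {nx ny : ℕ} (A : Matrix (Fin nx) (Fin nx) ℝ) (L : Matrix (Fin ny) (Fin nx) ℝ)
    (Q : Matrix (Fin nx) (Fin nx) ℝ) (R : Matrix (Fin ny) (Fin ny) ℝ) (lam : ℝ)
    (X : Matrix (Fin nx) (Fin nx) ℝ) (al phi : ℝ) :
    calX A L Q R lam X al phi =
      (1 - lam * phi) • predict A Q al X + (lam * phi) • riccati A L Q R al X :=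
  rfl

lemma calX_le_smul {nx ny : ℕ} {A : Matrix (Fin nx) (Fin nx) ℝ} {L : Matrix (Fin ny) (Fin nx) ℝ}
    {Q : Matrix (Fin nx) (Fin nx) ℝ} {R : Matrix (Fin ny) (Fin ny) ℝ} (hQ : Q.PosSemidef)
    (hR : R.PosDef) {β : ℝ} (hβ : 1 ≤ β) {Y Y' : Matrix (Fin nx) (Fin nx) ℝ}
    (hY : Y.PosSemidef) (hY' : Y'.PosSemidef) (hYY' : Y' ≤ β • Y) {lam al phi : ℝ}
    (hlam : lam ∈ Set.Icc (0 : ℝ) 1) (hphi : phi ∈ Set.Icc (0 : ℝ) 1) (hal : 0 < al) :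
    calX A L Q R lam Y' al phi ≤ β • calX A L Q R lam Y al phi := by
  have hμ : 0 ≤ lam * phi := mul_nonneg hlam.1 hphi.1
  have hμ' : 0 ≤ 1 - lam * phi := sub_nonneg.2 (mul_le_one₀ hlam.2 hphi.1 hphi.2)
  calc calX A L Q R lam Y' al phi
      ≤ (1 - lam * phi) • β • predict A Q al Y + (lam * phi) • β • riccati A L Q R al Y :=
        add_le_add
          (smul_le_smul_of_nonneg_left (predict_le_smul hQ hal.le hβ hYY') hμ')
          (smul_le_smul_of_nonneg_left (riccati_le_smul hQ hR hal hβ hY hY' hYY') hμ)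
    _ = β • calX A L Q R lam Y al phi := by rw [calX_eq, smul_add, smul_comm β, smul_comm β]

lemma loewnerLE_iff_le {nx : ℕ} {X Y : Matrix (Fin nx) (Fin nx) ℝ} : loewnerLE X Y ↔ X ≤ Y :=
  Iff.rfl

theorem stmt_6_general {nx ny N : ℕ}
    (A : Matrix (Fin nx) (Fin nx) ℝ) (L : Matrix (Fin ny) (Fin nx) ℝ)
    (Q : Matrix (Fin nx) (Fin nx) ℝ) (R : Matrix (Fin ny) (Fin ny) ℝ)
    (hQ : Q.PosDef) (hR : R.PosDef)
    (P : Matrix (Fin N) (Fin N) ℝ)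
    (hPnonneg : ∀ m n, 0 ≤ P m n)
    (β : ℝ) (hβ : 1 ≤ β)
    (Y Y' : Fin N → Matrix (Fin nx) (Fin nx) ℝ)
    (hY : ∀ m, (Y m).PosSemidef) (hY' : ∀ m, (Y' m).PosSemidef)
    (hcomp : ∀ m, loewnerLE (Y' m) (β • Y m))
    (lam : ℝ) (hlam : lam ∈ Set.Icc (0 : ℝ) 1)
    (γ : Fin N → ℝ) (hγ : ∀ m, γ m ∈ Set.Icc (0 : ℝ) 1)
    (α : Fin N → ℝ) (hα : ∀ m, 0 < α m)
    (n : Fin N) :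
    loewnerLE (∑ m, P m n • calX A L Q R lam (Y' m) (α m) (γ m))
      (β • ∑ m, P m n • calX A L Q R lam (Y m) (α m) (γ m)) := by
  rw [loewnerLE_iff_le, Finset.smul_sum]
  refine Finset.sum_le_sum fun m _ => ?_
  rw [smul_comm β]
  exact smul_le_smul_of_nonneg_left
    (calX_le_smul hQ.posSemidef hR hβ (hY m) (hY' m) (hcomp m) hlam (hγ m) (hα m)) (hPnonneg m n)

theorem stmt_6 {nx ny N : ℕ} (hnx : 0 < nx) (hny : 0 < ny) (hN : 0 < N)
    (A : Matrix (Fin nx) (Fin nx) ℝ) (L : Matrix (Fin ny) (Fin nx) ℝ)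
    (Q : Matrix (Fin nx) (Fin nx) ℝ) (R : Matrix (Fin ny) (Fin ny) ℝ)
    (hQ : Q.PosDef) (hR : R.PosDef)
    (P : Matrix (Fin N) (Fin N) ℝ)
    (hPnonneg : ∀ m n, 0 ≤ P m n) (hProw : ∀ m, ∑ n, P m n = 1)
    (β : ℝ) (hβ : 1 ≤ β)
    (Y Y' : Fin N → Matrix (Fin nx) (Fin nx) ℝ)
    (hY : ∀ m, (Y m).PosSemidef) (hY' : ∀ m, (Y' m).PosSemidef)
    (hcomp : ∀ m, loewnerLE (Y' m) (β • Y m))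
    (lam : ℝ) (hlam : lam ∈ Set.Icc (0 : ℝ) 1)
    (γ : Fin N → ℝ) (hγ : ∀ m, γ m ∈ Set.Icc (0 : ℝ) 1)
    (α : Fin N → ℝ) (hα : ∀ m, 0 < α m)
    (n : Fin N) :
    loewnerLE (∑ m, P m n • calX A L Q R lam (Y' m) (α m) (γ m))
      (β • ∑ m, P m n • calX A L Q R lam (Y m) (α m) (γ m)) :=
  stmt_6_general A L Q R hQ hR P hPnonneg β hβ Y Y' hY hY' hcomp lam hlam γ hγ α hα n
end

section
/- Existence of a fixed point of the coupled Lyapunov operator iff the spectral radius condition holds (Proposition 3): there exists an N-tuple S = (S_1, …, S_N) of positive semidefinite symmetric n_x×n_x matrices satisfying S_n = 𝒮_{e,n}(S) for all n = 1,…,N if and only if ρ(𝒜_e) < 1. Moreover, when ρ(𝒜_e) < 1 this fixed point is unique. -/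
open Matrix Kronecker

/-- The coupled Lyapunov operator
`𝒮_{e,n}(V) = ∑ m, p_{e,mn} (1 − λ γ̂_{e,m}) A V_m Aᵀ + π^∞_{e,n} Q`. -/
noncomputable def Sop {nx N : ℕ} (A Q : Matrix (Fin nx) (Fin nx) ℝ)
    (Pe : Matrix (Fin N) (Fin N) ℝ) (γ : Fin N → ℝ) (lam : ℝ) (π : Fin N → ℝ)
    (V : Fin N → Matrix (Fin nx) (Fin nx) ℝ) (n : Fin N) :
    Matrix (Fin nx) (Fin nx) ℝ :=
  (∑ m, (Pe m n * (1 - lam * γ m)) • (A * V m * Aᵀ)) + π n • Q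

/-- Block diagonal matrix (direct sum) of `N` matrices on the index set `I`. -/
def blkDiag {N : ℕ} {I : Type} [DecidableEq (Fin N)]
    (f : Fin N → Matrix I I ℝ) : Matrix (Fin N × I) (Fin N × I) ℝ :=
  Matrix.of fun p q => if p.1 = q.1 then f p.1 p.2 q.2 else 0

/-- The matrix `𝒜_e = (P_eᵀ ⊗ I_{n_x²}) · blkdiag_m ((1 − λ γ̂_{e,m}) (A ⊗ A))`. -/
noncomputable def calAe {nx N : ℕ} (A : Matrix (Fin nx) (Fin nx) ℝ)
    (Pe : Matrix (Fin N) (Fin N) ℝ) (γ : Fin N → ℝ) (lam : ℝ) :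
    Matrix (Fin N × (Fin nx × Fin nx)) (Fin N × (Fin nx × Fin nx)) ℝ :=
  (Peᵀ ⊗ₖ (1 : Matrix (Fin nx × Fin nx) (Fin nx × Fin nx) ℝ)) *
    blkDiag (fun m => (1 - lam * γ m) • (A ⊗ₖ A))

/-- Spectral radius of a real square matrix: the largest absolute value of its
(complex) eigenvalues. -/
noncomputable def specRad {ι : Type} [Fintype ι] [DecidableEq ι]
    (M : Matrix ι ι ℝ) : ℝ :=
  sSup {r : ℝ | ∃ μ ∈ spectrum ℂ (M.map (Complex.ofReal ·)), r = ‖μ‖}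

/-!
Write `𝓛` for the coupled Lyapunov map `V ↦ (∑ m, c m n • A V_m Aᵀ)_n`, where
`c m n = p_{e,mn} (1 - λ γ̂_{e,m}) ≥ 0`, and `b_n = π^∞_{e,n} Q`. In row-major coordinates `𝓛` is
multiplication by `𝒜_e`, so by Gelfand's formula `ρ(𝒜_e) < 1` iff `𝓛 ^ k → 0`.

If `𝓛 ^ k → 0`, then `1 - 𝓛` is injective, hence bijective, and the unique solution of
`S = 𝓛 S + b` is the limit of the partial sums `∑_{j<k} 𝓛^j b`, which are positive semidefinite
because `𝓛` preserves positivity.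

Conversely, unrolling a positive semidefinite solution gives `𝓛^k S + ∑_{j<k} 𝓛^j b = S`, so the
traces of the `𝓛^j b` are summable and `𝓛^j b → 0`. Each `b_n` is positive definite, so every
Hermitian tuple `H` satisfies `-s b ≤ H ≤ s b` for some `s`, and monotonicity of `𝓛` gives
`𝓛^k H → 0`. This is done for the complexified map, since every complex tuple is `H₁ + i H₂` with
`H₁, H₂` Hermitian, whereas positivity says nothing about antisymmetric real tuples.
-/

open Filter Topology
open scoped ENNReal NNReal MatrixOrder ComplexOrder ComplexStarModule

theorem spectralRadius_lt_one_iff_tendsto_pow {A : Type*} [NormedRing A] [NormedAlgebra ℂ A]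
    [CompleteSpace A] (a : A) :
    spectralRadius ℂ a < 1 ↔ Tendsto (fun k => a ^ k) atTop (𝓝 0) := by
  rw [tendsto_zero_iff_norm_tendsto_zero]
  constructor
  · intro h
    obtain ⟨c, hc, hc1⟩ := exists_between h
    have hgelfand := spectrum.pow_nnnorm_pow_one_div_tendsto_nhds_spectralRadius a
    have hev : ∀ᶠ k : ℕ in atTop, ‖a ^ k‖₊ ≤ c.toNNReal ^ k := by
      filter_upwards [hgelfand.eventually_lt_const hc, eventually_ge_atTop 1] with k hk hk1
      have := ENNReal.rpow_le_rpow hk.le (z := (k : ℝ)) (by positivity)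
      rw [← ENNReal.rpow_mul, one_div, inv_mul_cancel₀ (by positivity), ENNReal.rpow_one,
        ENNReal.rpow_natCast, ← ENNReal.coe_toNNReal (ne_top_of_lt hc1)] at this
      exact_mod_cast this
    refine squeeze_zero' (Eventually.of_forall fun _ => norm_nonneg _) ?_
      (tendsto_pow_atTop_nhds_zero_of_lt_one c.toNNReal.coe_nonneg ?_)
    · filter_upwards [hev] with k hk
      exact_mod_cast hk
    · exact_mod_cast ENNReal.toNNReal_lt_of_lt_coe (by simpa using hc1)
  · intro h
    obtain ⟨k, hk⟩ := ((h.mul_const ‖(1 : A)‖).eventually_lt_const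
      (show 0 * ‖(1 : A)‖ < 1 by simp)).exists_forall_of_atTop
    have hk1 : ‖a ^ (k + 1)‖₊ * ‖(1 : A)‖₊ < 1 := by
      rw [← NNReal.coe_lt_coe]; push_cast; simpa using hk (k + 1) (by omega)
    calc spectralRadius ℂ a
        ≤ (‖a ^ (k + 1)‖₊ : ℝ≥0∞) ^ (1 / (k + 1 : ℝ)) * (‖(1 : A)‖₊ : ℝ≥0∞) ^ (1 / (k + 1 : ℝ)) :=
          spectrum.spectralRadius_le_pow_nnnorm_pow_one_div ℂ a k
      _ = ((‖a ^ (k + 1)‖₊ * ‖(1 : A)‖₊ : ℝ≥0) : ℝ≥0∞) ^ (1 / (k + 1 : ℝ)) := by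
          rw [ENNReal.coe_mul, ENNReal.mul_rpow_of_nonneg _ _ (by positivity)]
      _ < 1 := ENNReal.rpow_lt_one (by exact_mod_cast hk1) (by positivity)

namespace Matrix

section SpectralRadius

variable {ι : Type} [Fintype ι] [DecidableEq ι]

theorem specRad_lt_one_iff_spectralRadius_lt_one (M : Matrix ι ι ℝ) :
    specRad M < 1 ↔ spectralRadius ℂ (M.map (Complex.ofReal ·)) < 1 := by
  let _ := Matrix.linftyOpNormedRing (n := ι) (α := ℂ)
  let _ := Matrix.linftyOpNormedAlgebra (n := ι) (R := ℂ) (α := ℂ)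
  have hbdd : BddAbove {r : ℝ | ∃ μ ∈ spectrum ℂ (M.map (Complex.ofReal ·)), r = ‖μ‖} :=
    ⟨_, by rintro _ ⟨μ, hμ, rfl⟩; exact spectrum.norm_le_norm_mul_of_mem hμ⟩
  constructor
  · intro h
    refine lt_of_le_of_lt (iSup₂_le fun μ hμ => ?_) (ENNReal.ofReal_lt_one.mpr h)
    rw [← enorm_eq_nnnorm, ← ofReal_norm]
    exact ENNReal.ofReal_le_ofReal (le_csSup hbdd ⟨μ, hμ, rfl⟩)
  · intro h
    refine lt_of_le_of_lt (Real.sSup_le ?_ ENNReal.toReal_nonneg)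
      (ENNReal.toReal_lt_of_lt_ofReal (by simpa using h))
    rintro _ ⟨μ, hμ, rfl⟩
    simpa using ENNReal.toReal_mono h.ne_top (le_iSup₂ (α := ℝ≥0∞) μ hμ)

theorem tendsto_pow_map_ofReal_iff (M : Matrix ι ι ℝ) :
    Tendsto (fun k => M.map (Complex.ofReal ·) ^ k) atTop (𝓝 0) ↔
      Tendsto (fun k => M ^ k) atTop (𝓝 0) := by
  have hpow : (fun k => M.map (Complex.ofReal ·) ^ k) = fun k => (M ^ k).map Complex.ofReal :=
    funext fun k => (M.map_pow Complex.ofRealHom k).symm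
  rw [hpow]
  constructor
  · intro h
    simpa [Function.comp_def, Matrix.map_map] using
      ((continuous_id.matrix_map Complex.continuous_re).tendsto 0).comp h
  · intro h
    simpa [Function.comp_def] using
      ((continuous_id.matrix_map Complex.continuous_ofReal).tendsto 0).comp h

theorem specRad_lt_one_iff_tendsto_pow (M : Matrix ι ι ℝ) :
    specRad M < 1 ↔ Tendsto (fun k => M ^ k) atTop (𝓝 0) := by
  let _ := Matrix.linftyOpNormedRing (n := ι) (α := ℂ)
  let _ := Matrix.linftyOpNormedAlgebra (n := ι) (R := ℂ) (α := ℂ)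
  rw [specRad_lt_one_iff_spectralRadius_lt_one, spectralRadius_lt_one_iff_tendsto_pow]
  exact tendsto_pow_map_ofReal_iff M

theorem tendsto_pow_iff_mulVec {R : Type*} [CommRing R] [TopologicalSpace R] [IsTopologicalRing R]
    (M : Matrix ι ι R) :
    Tendsto (fun k => M ^ k) atTop (𝓝 0) ↔ ∀ x, Tendsto (fun k => (M ^ k) *ᵥ x) atTop (𝓝 0) := by
  refine ⟨fun h x => by simpa [Function.comp_def] using
    ((continuous_id.matrix_mulVec continuous_const).tendsto 0).comp h, fun h => ?_⟩
  refine tendsto_pi_nhds.2 fun i => tendsto_pi_nhds.2 fun j => ?_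
  simpa [Matrix.mulVec_single_one] using tendsto_pi_nhds.1 (h (Pi.single j 1)) i

end SpectralRadius

section Order

variable {n : Type*} [Fintype n] {𝕜 : Type*} [RCLike 𝕜]

theorem PosSemidef.re_apply_le_re_trace {P : Matrix n n 𝕜} (hP : P.PosSemidef) (p : n) :
    RCLike.re (P p p) ≤ RCLike.re P.trace := by
  rw [Matrix.trace, map_sum]
  exact Finset.single_le_sum (f := fun i => RCLike.re (P i i))
    (fun i _ => (RCLike.nonneg_iff.mp hP.diag_nonneg).1) (Finset.mem_univ p)

theorem PosSemidef.norm_apply_le_re_trace {P : Matrix n n 𝕜} (hP : P.PosSemidef) (p q : n) :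
    ‖P p q‖ ≤ RCLike.re P.trace := by
  -- the `2 × 2` principal minor on `p, q` is nonnegative: `‖P p q‖² ≤ P p p * P q q`
  have hdet := (hP.submatrix ![p, q]).det_nonneg
  simp only [Matrix.det_fin_two, Matrix.submatrix_apply, Matrix.cons_val_zero,
    Matrix.cons_val_one, ← hP.isHermitian.apply q p, RCLike.star_def, RCLike.mul_conj] at hdet
  have hpp := RCLike.nonneg_iff.mp (hP.diag_nonneg (i := p))
  have hqq := RCLike.nonneg_iff.mp (hP.diag_nonneg (i := q))
  have hre := (RCLike.nonneg_iff.mp hdet).1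
  simp only [map_sub, RCLike.mul_re, hpp.2, hqq.2, mul_zero, sub_zero] at hre
  norm_cast at hre
  nlinarith [norm_nonneg (P p q), hP.re_apply_le_re_trace p, hP.re_apply_le_re_trace q]

theorem norm_apply_le_re_trace_of_neg_le_of_le {X Y : Matrix n n 𝕜} (h₁ : -Y ≤ X) (h₂ : X ≤ Y)
    (p q : n) : ‖X p q‖ ≤ RCLike.re Y.trace := by
  have hX : (2 : 𝕜) • X = (X - -Y) - (Y - X) := by
    rw [two_smul]; abel
  have h := norm_sub_le ((X - -Y) p q) ((Y - X) p q)
  rw [← Matrix.sub_apply, ← hX, Matrix.smul_apply, norm_smul, RCLike.norm_two] at h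
  have h₁' := (Matrix.le_iff.mp h₁).norm_apply_le_re_trace p q
  have h₂' := (Matrix.le_iff.mp h₂).norm_apply_le_re_trace p q
  simp only [Matrix.trace_sub, Matrix.trace_neg, map_sub, map_neg] at h₁' h₂'
  linarith

theorem isClosed_setOf_nonneg : IsClosed {A : Matrix n n 𝕜 | 0 ≤ A} := by
  simp only [Matrix.nonneg_iff_posSemidef, Matrix.posSemidef_iff_dotProduct_mulVec,
    Set.ofPred_and, Set.ofPred_forall]
  refine (isClosed_eq (continuous_id.matrix_conjTranspose) continuous_id).inter
    (isClosed_iInter fun x => isClosed_le continuous_const ?_)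
  exact continuous_const.dotProduct (continuous_id.matrix_mulVec continuous_const)

open scoped Matrix.Norms.L2Operator in
theorem PosDef.exists_le_smul [DecidableEq n] {Q H : Matrix n n ℂ} (hQ : Q.PosDef)
    (hH : H.IsHermitian) :
    ∃ s : ℝ, -(s • Q) ≤ H ∧ H ≤ s • Q := by
  cases isEmpty_or_nonempty n
  · exact ⟨0, by simp [Subsingleton.elim H 0]⟩
  obtain ⟨r, hr, hrQ⟩ := (CFC.exists_pos_algebraMap_le_iff hQ.isHermitian.isSelfAdjoint).2
    fun x hx => hQ.isStrictlyPositive.spectrum_pos hx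
  have hHQ : algebraMap ℝ _ ‖H‖ ≤ (‖H‖ / r) • Q := by
    calc algebraMap ℝ _ ‖H‖ = (‖H‖ / r) • algebraMap ℝ (Matrix n n ℂ) r := by
          rw [Algebra.smul_def, ← map_mul, div_mul_cancel₀ _ hr.ne']
      _ ≤ (‖H‖ / r) • Q := smul_le_smul_of_nonneg_left hrQ (by positivity)
  exact ⟨‖H‖ / r,
    (neg_le_neg hHQ).trans (IsSelfAdjoint.neg_algebraMap_norm_le_self hH.isSelfAdjoint),
    (IsSelfAdjoint.le_algebraMap_norm_self hH.isSelfAdjoint).trans hHQ⟩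

theorem PosSemidef.map_ofReal {M : Matrix n n ℝ} (hM : M.PosSemidef) :
    (M.map ((↑) : ℝ → ℂ)).PosSemidef := by
  obtain ⟨m, v, rfl⟩ := Matrix.posSemidef_iff_eq_sum_vecMulVec.mp hM
  refine Matrix.posSemidef_iff_eq_sum_vecMulVec.mpr ⟨m, fun i j => v i j, ?_⟩
  ext p q
  simp [Matrix.sum_apply, Matrix.vecMulVec_apply]

theorem PosDef.map_ofReal [DecidableEq n] {M : Matrix n n ℝ} (hM : M.PosDef) :
    (M.map ((↑) : ℝ → ℂ)).PosDef := by
  refine hM.posSemidef.map_ofReal.posDef_iff_det_ne_zero.mpr ?_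
  have h : ((M.det : ℝ) : ℂ) = (M.map ((↑) : ℝ → ℂ)).det := Complex.ofRealHom.map_det M
  rw [← h]
  exact_mod_cast hM.det_pos.ne'

end Order

end Matrix

namespace Module.End

section Iterate

variable {R E : Type*} [CommRing R] [AddCommGroup E] [Module R E] (T : Module.End R E)

theorem eq_pow_apply_add_sum_of_eq_apply_add {S b : E} (h : S = T S + b) (k : ℕ) :
    S = (T ^ k) S + ∑ j ∈ Finset.range k, (T ^ j) b := by
  induction k with
  | zero => simp
  | succ k ih =>
    rw [Finset.sum_range_succ, pow_succ, Module.End.mul_apply, ← add_assoc, add_right_comm,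
      ← map_add, ← h]
    exact ih

theorem tendsto_sum_range_pow_apply [TopologicalSpace E] [IsTopologicalAddGroup E] {S b : E}
    (h : S = T S + b) (hS : Tendsto (fun k => (T ^ k) S) atTop (𝓝 0)) :
    Tendsto (fun k => ∑ j ∈ Finset.range k, (T ^ j) b) atTop (𝓝 S) := by
  have hsum (k : ℕ) : ∑ j ∈ Finset.range k, (T ^ j) b = S - (T ^ k) S :=
    eq_sub_of_add_eq' (T.eq_pow_apply_add_sum_of_eq_apply_add h k).symm
  simpa [hsum] using tendsto_const_nhds.sub hS

theorem pow_apply_nonneg [Preorder E] (hT : ∀ V, 0 ≤ V → 0 ≤ T V) (k : ℕ) {V : E} (hV : 0 ≤ V) :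
    0 ≤ (T ^ k) V := by
  induction k with
  | zero => exact hV
  | succ k ih => rw [pow_succ', Module.End.mul_apply]; exact hT _ ih

theorem pow_apply_mono [PartialOrder E] [IsOrderedAddMonoid E] (hT : ∀ V, 0 ≤ V → 0 ≤ T V)
    (k : ℕ) {V W : E} (h : V ≤ W) : (T ^ k) V ≤ (T ^ k) W := by
  rw [← sub_nonneg, ← map_sub]
  exact T.pow_apply_nonneg hT k (sub_nonneg.mpr h)

end Iterate

theorem existsUnique_eq_apply_add_of_tendsto_pow {K E : Type*} [Field K] [AddCommGroup E]
    [Module K E] [FiniteDimensional K E] [TopologicalSpace E] [T2Space E] (T : Module.End K E)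
    (hT : ∀ V, Tendsto (fun k => (T ^ k) V) atTop (𝓝 0)) (b : E) : ∃! S, S = T S + b := by
  have hinj : Function.Injective (1 - T : Module.End K E) := by
    rw [← LinearMap.ker_eq_bot, eq_bot_iff]
    intro V hV
    have hTV : T V = V := (sub_eq_zero.mp hV).symm
    have hpow (k : ℕ) : (T ^ k) V = V := by
      induction k with
      | zero => rfl
      | succ k ih => rw [pow_succ, Module.End.mul_apply, hTV, ih]
    simpa [hpow] using hT V
  have hsol (S : E) : S = T S + b ↔ (1 - T : Module.End K E) S = b := by
    rw [LinearMap.sub_apply, Module.End.one_apply, sub_eq_iff_eq_add']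
  simpa only [hsol] using
    (Function.Bijective.existsUnique ⟨hinj, LinearMap.injective_iff_surjective.mp hinj⟩ b)

section Decay

variable {ι n : Type*} [Fintype n]

theorem tendsto_re_trace_pow_apply (T : Module.End ℂ (ι → Matrix n n ℂ))
    (hT : ∀ V, 0 ≤ V → 0 ≤ T V) {S b : ι → Matrix n n ℂ} (hS : 0 ≤ S) (hSb : S = T S + b)
    (hb : 0 ≤ b) (i : ι) : Tendsto (fun k => RCLike.re ((T ^ k) b i).trace) atTop (𝓝 0) := by
  have hre {V : ι → Matrix n n ℂ} (hV : 0 ≤ V) : 0 ≤ RCLike.re (V i).trace :=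
    (RCLike.nonneg_iff.mp (Matrix.nonneg_iff_posSemidef.mp (hV i)).trace_nonneg).1
  refine (summable_of_sum_range_le (c := RCLike.re (S i).trace)
    (fun k => hre (T.pow_apply_nonneg hT k hb)) fun k => ?_).tendsto_atTop_zero
  have hsum := congrArg (fun V => RCLike.re (V i).trace)
    (T.eq_pow_apply_add_sum_of_eq_apply_add hSb k)
  simp only [Pi.add_apply, Finset.sum_apply, Matrix.trace_add, Matrix.trace_sum, map_add,
    map_sum] at hsum
  linarith [hre (T.pow_apply_nonneg hT k hS)]

theorem tendsto_pow_apply_of_isHermitian [Fintype ι] [DecidableEq n]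
    (T : Module.End ℂ (ι → Matrix n n ℂ)) (hT : ∀ V, 0 ≤ V → 0 ≤ T V)
    {S b : ι → Matrix n n ℂ} (hS : 0 ≤ S) (hSb : S = T S + b)
    (hb : ∀ i, (b i).PosDef) {H : ι → Matrix n n ℂ} (hH : ∀ i, (H i).IsHermitian) :
    Tendsto (fun k => (T ^ k) H) atTop (𝓝 0) := by
  choose s hs using fun i => (hb i).exists_le_smul (hH i)
  obtain ⟨t, ht⟩ := (Set.finite_range s).bddAbove
  have hb0 : 0 ≤ b := fun i => Matrix.nonneg_iff_posSemidef.mpr (hb i).posSemidef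
  have hsb i : s i • b i ≤ t • b i := smul_le_smul_of_nonneg_right (ht ⟨i, rfl⟩) (hb0 i)
  have hle : H ≤ t • b := fun i => (hs i).2.trans (hsb i)
  have hge : -(t • b) ≤ H := fun i => (neg_le_neg (hsb i)).trans (hs i).1
  refine tendsto_pi_nhds.2 fun i => tendsto_pi_nhds.2 fun p => tendsto_pi_nhds.2 fun q => ?_
  refine squeeze_zero_norm (a := fun k => t * RCLike.re ((T ^ k) b i).trace) (fun k => ?_)
    (by simpa using (tendsto_re_trace_pow_apply T hT hS hSb hb0 i).const_mul t)
  have h₁ := T.pow_apply_mono hT k hge i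
  have h₂ := T.pow_apply_mono hT k hle i
  simp only [map_neg, Pi.neg_apply] at h₁ h₂
  simpa using Matrix.norm_apply_le_re_trace_of_neg_le_of_le h₁ h₂ p q

theorem tendsto_pow_apply_of_posDef [Fintype ι] [DecidableEq n]
    (T : Module.End ℂ (ι → Matrix n n ℂ)) (hT : ∀ V, 0 ≤ V → 0 ≤ T V)
    {S b : ι → Matrix n n ℂ} (hS : 0 ≤ S) (hSb : S = T S + b)
    (hb : ∀ i, (b i).PosDef) (V : ι → Matrix n n ℂ) :
    Tendsto (fun k => (T ^ k) V) atTop (𝓝 0) := by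
  have hsa (H : selfAdjoint (ι → Matrix n n ℂ)) : Tendsto (fun k => (T ^ k) H) atTop (𝓝 0) :=
    tendsto_pow_apply_of_isHermitian T hT hS hSb hb fun i => congrFun H.2 i
  rw [← realPart_add_I_smul_imaginaryPart V]
  simpa using (hsa (ℜ V)).add ((hsa (ℑ V)).const_smul Complex.I)

end Decay

theorem existsUnique_nonneg_eq_apply_add_of_tendsto_pow {ι n : Type*} [Fintype ι] [Fintype n]
    (T : Module.End ℝ (ι → Matrix n n ℝ)) (hT : ∀ V, 0 ≤ V → 0 ≤ T V)
    (hdecay : ∀ V, Tendsto (fun k => (T ^ k) V) atTop (𝓝 0)) {b : ι → Matrix n n ℝ} (hb : 0 ≤ b) :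
    ∃! S, 0 ≤ S ∧ S = T S + b := by
  obtain ⟨S, hS, huniq⟩ := T.existsUnique_eq_apply_add_of_tendsto_pow hdecay b
  refine ⟨S, ⟨?_, hS⟩, fun S' hS' => huniq S' hS'.2⟩
  have hclosed : IsClosed {V : ι → Matrix n n ℝ | 0 ≤ V} := by
    simp only [Pi.le_def, Pi.zero_apply, Set.ofPred_forall]
    exact isClosed_iInter fun i => Matrix.isClosed_setOf_nonneg.preimage
      (continuous_apply i : Continuous fun V : ι → Matrix n n ℝ => V i)
  exact hclosed.mem_of_tendsto (T.tendsto_sum_range_pow_apply hS (hdecay S))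
    (Eventually.of_forall fun k => Finset.sum_nonneg fun j _ => T.pow_apply_nonneg hT j hb)

end Module.End

section CoupledLyapunov

variable {ι n : Type*} [Fintype ι] [Fintype n] {𝕜 : Type*} [RCLike 𝕜]

def coupledLyapunovMap (c : ι → ι → ℝ) (B : Matrix n n 𝕜) : Module.End 𝕜 (ι → Matrix n n 𝕜) where
  toFun V j := ∑ i, c i j • (B * V i * Bᴴ)
  map_add' U V := by
    ext1 j
    simp [Matrix.mul_add, Matrix.add_mul, Finset.sum_add_distrib]
  map_smul' z V := by
    ext1 j
    simp [Finset.smul_sum, smul_comm z]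

theorem coupledLyapunovMap_apply (c : ι → ι → ℝ) (B : Matrix n n 𝕜) (V : ι → Matrix n n 𝕜)
    (j : ι) : coupledLyapunovMap c B V j = ∑ i, c i j • (B * V i * Bᴴ) :=
  rfl

theorem coupledLyapunovMap_nonneg {c : ι → ι → ℝ} (hc : ∀ i j, 0 ≤ c i j) (B : Matrix n n 𝕜)
    {V : ι → Matrix n n 𝕜} (hV : 0 ≤ V) : 0 ≤ coupledLyapunovMap c B V := fun j =>
  Finset.sum_nonneg fun i _ => smul_nonneg (hc i j) <| Matrix.nonneg_iff_posSemidef.mpr <|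
    (Matrix.nonneg_iff_posSemidef.mp (hV i)).mul_mul_conjTranspose_same B

theorem coupledLyapunovMap_map_ofReal (c : ι → ι → ℝ) (A : Matrix n n ℝ) (V : ι → Matrix n n ℝ) :
    coupledLyapunovMap c (A.map ((↑) : ℝ → ℂ)) (fun i => (V i).map (↑)) =
      fun j => (coupledLyapunovMap c A V j).map (↑) := by
  ext j p q
  simp [coupledLyapunovMap_apply, Matrix.sum_apply, Matrix.mul_apply, Finset.sum_mul]

theorem coupledLyapunovMap_pow_map_ofReal (c : ι → ι → ℝ) (A : Matrix n n ℝ) (k : ℕ)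
    (V : ι → Matrix n n ℝ) :
    (coupledLyapunovMap c (A.map ((↑) : ℝ → ℂ)) ^ k) (fun i => (V i).map (↑)) =
      fun i => ((coupledLyapunovMap c A ^ k) V i).map (↑) := by
  induction k with
  | zero => rfl
  | succ k ih =>
    rw [pow_succ', Module.End.mul_apply, ih, coupledLyapunovMap_map_ofReal, pow_succ',
      Module.End.mul_apply]

theorem coupledLyapunovMap_tendsto_pow_apply {c : ι → ι → ℝ} (hc : ∀ i j, 0 ≤ c i j)
    (A : Matrix n n ℝ) {S b : ι → Matrix n n ℝ} (hS : 0 ≤ S) (hb : ∀ i, (b i).PosDef)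
    (hSb : S = coupledLyapunovMap c A S + b) (V : ι → Matrix n n ℝ) :
    Tendsto (fun k => (coupledLyapunovMap c A ^ k) V) atTop (𝓝 0) := by
  classical
  have hSbC : (fun i => (S i).map ((↑) : ℝ → ℂ)) =
      coupledLyapunovMap c (A.map (↑)) (fun i => (S i).map (↑)) + fun i => (b i).map (↑) := by
    rw [coupledLyapunovMap_map_ofReal]
    ext1 i
    conv_lhs => rw [hSb]
    exact Matrix.map_add _ Complex.ofReal_add _ _
  have hdecay := Module.End.tendsto_pow_apply_of_posDef _
    (fun _ => coupledLyapunovMap_nonneg hc _)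
    (fun i => Matrix.nonneg_iff_posSemidef.mpr (Matrix.nonneg_iff_posSemidef.mp (hS i)).map_ofReal)
    hSbC (fun i => (hb i).map_ofReal) (fun i => (V i).map (↑))
  simp only [coupledLyapunovMap_pow_map_ofReal] at hdecay
  have hre : Continuous fun W : ι → Matrix n n ℂ => fun i => (W i).map Complex.re :=
    continuous_pi fun i => (continuous_apply i).matrix_map Complex.continuous_re
  convert (hre.tendsto 0).comp hdecay using 2
  · ext k i : 2
    simp
  · ext i : 1
    simp

end CoupledLyapunov

/-- Row-major stacking of a tuple of square matrices, the coordinates in which `calAe` acts. -/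
def vecTuple {ι n R : Type*} [CommSemiring R] :
    (ι → Matrix n n R) ≃ₗ[R] (ι × n × n → R) where
  toFun V x := V x.1 x.2.1 x.2.2
  invFun f i := Matrix.of fun p q => f (i, p, q)
  map_add' _ _ := rfl
  map_smul' _ _ := rfl
  left_inv _ := rfl
  right_inv _ := rfl

theorem vecTuple_apply {ι n R : Type*} [CommSemiring R] (V : ι → Matrix n n R) (x : ι × n × n) :
    vecTuple V x = V x.1 x.2.1 x.2.2 :=
  rfl

section Proposition

variable {nx N : ℕ} (A : Matrix (Fin nx) (Fin nx) ℝ) (Pe : Matrix (Fin N) (Fin N) ℝ)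
  (γ : Fin N → ℝ) (lam : ℝ)

def calAeWeight (m n : Fin N) : ℝ := Pe m n * (1 - lam * γ m)

theorem calAeWeight_nonneg (hPe : ∀ m n, 0 ≤ Pe m n) (hγ : ∀ m, γ m ∈ Set.Icc (0 : ℝ) 1)
    (hlam : lam ∈ Set.Icc (0 : ℝ) 1) (m n : Fin N) : 0 ≤ calAeWeight Pe γ lam m n :=
  mul_nonneg (hPe m n) (sub_nonneg.mpr (mul_le_one₀ hlam.2 (hγ m).1 (hγ m).2))

theorem calAe_apply (n m : Fin N) (p q : Fin nx × Fin nx) :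
    calAe A Pe γ lam (n, p) (m, q) = calAeWeight Pe γ lam m n * (A p.1 q.1 * A p.2 q.2) := by
  obtain ⟨p1, p2⟩ := p
  simp only [calAe, Matrix.mul_apply, blkDiag, Matrix.kroneckerMap_apply, Matrix.of_apply,
    Fintype.sum_prod_type, Matrix.transpose_apply, Matrix.one_apply, Matrix.smul_apply,
    smul_eq_mul, Prod.mk.injEq, ite_and, mul_ite, ite_mul, mul_zero, zero_mul, mul_one]
  rw [Finset.sum_comm]
  simp [Finset.sum_ite_eq, Finset.sum_ite_eq', calAeWeight]
  ring

theorem calAe_mulVec_vecTuple (V : Fin N → Matrix (Fin nx) (Fin nx) ℝ) :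
    calAe A Pe γ lam *ᵥ vecTuple V =
      vecTuple (coupledLyapunovMap (calAeWeight Pe γ lam) A V) := by
  ext ⟨n, p, q⟩
  simp only [Matrix.mulVec, dotProduct, Fintype.sum_prod_type, calAe_apply, vecTuple_apply,
    coupledLyapunovMap_apply, Matrix.sum_apply, Matrix.smul_apply, Matrix.mul_apply,
    Matrix.conjTranspose_apply, star_trivial, smul_eq_mul, Finset.mul_sum, Finset.sum_mul]
  refine Finset.sum_congr rfl fun m _ => ?_
  rw [Finset.sum_comm]
  exact Finset.sum_congr rfl fun k _ => Finset.sum_congr rfl fun l _ => by ring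

theorem calAe_pow_mulVec_vecTuple (k : ℕ) (V : Fin N → Matrix (Fin nx) (Fin nx) ℝ) :
    (calAe A Pe γ lam ^ k) *ᵥ vecTuple V =
      vecTuple ((coupledLyapunovMap (calAeWeight Pe γ lam) A ^ k) V) := by
  induction k generalizing V with
  | zero => simp
  | succ k ih =>
    rw [pow_succ, ← Matrix.mulVec_mulVec, calAe_mulVec_vecTuple, ih, pow_succ,
      Module.End.mul_apply]

theorem specRad_calAe_lt_one_iff :
    specRad (calAe A Pe γ lam) < 1 ↔ ∀ V, Tendsto
      (fun k => (coupledLyapunovMap (calAeWeight Pe γ lam) A ^ k) V) atTop (𝓝 0) := by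
  let e := (vecTuple (ι := Fin N) (n := Fin nx) (R := ℝ)).toContinuousLinearEquiv
  have he (f : ℕ → Fin N → Matrix (Fin nx) (Fin nx) ℝ) :
      Tendsto f atTop (𝓝 0) ↔ Tendsto (fun k => e (f k)) atTop (𝓝 0) := by
    rw [e.toHomeomorph.isEmbedding.tendsto_nhds_iff]
    simp [Function.comp_def]
  rw [Matrix.specRad_lt_one_iff_tendsto_pow, Matrix.tendsto_pow_iff_mulVec, e.surjective.forall]
  refine forall_congr' fun V => ?_
  rw [he]
  simp [e, calAe_pow_mulVec_vecTuple]

theorem Sop_eq_coupledLyapunovMap_add (Q : Matrix (Fin nx) (Fin nx) ℝ) (π : Fin N → ℝ)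
    (V : Fin N → Matrix (Fin nx) (Fin nx) ℝ) (n : Fin N) :
    Sop A Q Pe γ lam π V n =
      coupledLyapunovMap (calAeWeight Pe γ lam) A V n + π n • Q := by
  rw [Sop, coupledLyapunovMap_apply, Matrix.conjTranspose_eq_transpose_of_trivial]
  rfl

end Proposition

theorem stmt_10_general {nx N : ℕ}
    (A : Matrix (Fin nx) (Fin nx) ℝ) (Q : Matrix (Fin nx) (Fin nx) ℝ) (hQ : Q.PosDef)
    (Pe : Matrix (Fin N) (Fin N) ℝ)
    (hPnonneg : ∀ m n, 0 ≤ Pe m n)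
    (γ : Fin N → ℝ) (hγ : ∀ m, γ m ∈ Set.Icc (0 : ℝ) 1)
    (lam : ℝ) (hlam : lam ∈ Set.Icc (0 : ℝ) 1)
    (π : Fin N → ℝ) (hπ : ∀ n, 0 < π n) :
    ((∃ S : Fin N → Matrix (Fin nx) (Fin nx) ℝ,
        (∀ n, (S n).PosSemidef) ∧ ∀ n, S n = Sop A Q Pe γ lam π S n) ↔
      specRad (calAe A Pe γ lam) < 1) ∧
    (specRad (calAe A Pe γ lam) < 1 →
      ∃! S : Fin N → Matrix (Fin nx) (Fin nx) ℝ,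
        (∀ n, (S n).PosSemidef) ∧ ∀ n, S n = Sop A Q Pe γ lam π S n) := by
  set L := coupledLyapunovMap (calAeWeight Pe γ lam) A
  set b : Fin N → Matrix (Fin nx) (Fin nx) ℝ := fun n => π n • Q
  have hc := calAeWeight_nonneg Pe γ lam hPnonneg hγ hlam
  have hb (n : Fin N) : (b n).PosDef := hQ.smul (hπ n)
  have hsol (S : Fin N → Matrix (Fin nx) (Fin nx) ℝ) :
      ((∀ n, (S n).PosSemidef) ∧ ∀ n, S n = Sop A Q Pe γ lam π S n) ↔ 0 ≤ S ∧ S = L S + b := by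
    simp only [Pi.le_def, Pi.zero_apply, Matrix.nonneg_iff_posSemidef, funext_iff, Pi.add_apply,
      Sop_eq_coupledLyapunovMap_add, L, b]
  have hunique (h : specRad (calAe A Pe γ lam) < 1) : ∃! S, 0 ≤ S ∧ S = L S + b :=
    L.existsUnique_nonneg_eq_apply_add_of_tendsto_pow (fun _ => coupledLyapunovMap_nonneg hc A)
      ((specRad_calAe_lt_one_iff A Pe γ lam).mp h)
      fun n => Matrix.nonneg_iff_posSemidef.mpr (hb n).posSemidef
  simp only [hsol]
  refine ⟨⟨fun ⟨S, hS, hSb⟩ => ?_, fun h => (hunique h).exists⟩, hunique⟩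
  exact (specRad_calAe_lt_one_iff A Pe γ lam).mpr
    (coupledLyapunovMap_tendsto_pow_apply hc A hS hb hSb)

theorem stmt_10 {nx N : ℕ} (hnx : 0 < nx) (hN : 0 < N)
    (A : Matrix (Fin nx) (Fin nx) ℝ) (Q : Matrix (Fin nx) (Fin nx) ℝ) (hQ : Q.PosDef)
    (Pe : Matrix (Fin N) (Fin N) ℝ)
    (hPnonneg : ∀ m n, 0 ≤ Pe m n) (hProw : ∀ m, ∑ n, Pe m n = 1)
    (γ : Fin N → ℝ) (hγ : ∀ m, γ m ∈ Set.Icc (0 : ℝ) 1)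
    (lam : ℝ) (hlam : lam ∈ Set.Icc (0 : ℝ) 1)
    (π : Fin N → ℝ) (hπ : ∀ n, 0 < π n) :
    ((∃ S : Fin N → Matrix (Fin nx) (Fin nx) ℝ,
        (∀ n, (S n).PosSemidef) ∧ ∀ n, S n = Sop A Q Pe γ lam π S n) ↔
      specRad (calAe A Pe γ lam) < 1) ∧
    (specRad (calAe A Pe γ lam) < 1 →
      ∃! S : Fin N → Matrix (Fin nx) (Fin nx) ℝ,
        (∀ n, (S n).PosSemidef) ∧ ∀ n, S n = Sop A Q Pe γ lam π S n) :=
  stmt_10_general A Q hQ Pe hPnonneg γ hγ lam hlam π hπ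
end
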